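/- arXiv:2601.20038 — 3 statements merged into one kernel-verified Lean document; each statement's English description precedes it below -/
import Mathlib

section
/- Let $G = (V,E)$ be a directed graph with $n = |V|$ vertices, nonnegative node costs $c$ and node lengths $x$ with $x_u \leq \delta/(6\log_2 n)$ for all $u \in V$, for some $\delta > 0$. Define $\mathrm{vol}(S) = \sum_{v \in S} c(v) x_v$. Then for any $v \in V$ there exists a radius $r \in [\delta/(6\log_2 n), \delta)$ such that $c(\Gamma^+(B^+(v,r))) \leq (12 \log_2 n / \delta)\,[\mathrm{vol}(B^+(v,r)) + \mathrm{vol}(V)/n]$. -/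
/-- A directed path from `u` to `v` given as the list of its vertices. -/
def DPath {V : Type*} (E : V → V → Prop) (u v : V) (l : List V) : Prop :=
  l.Chain' E ∧ l.head? = some u ∧ l.getLast? = some v

/-- The node-length of a path: sum of `x` over its vertices (both endpoints included). -/
def plen {V : Type*} (x : V → ℝ) (l : List V) : ℝ := (l.map x).sum

/-- Node-length shortest path distance. -/
noncomputable def dgr {V : Type*} (E : V → V → Prop) (x : V → ℝ) (u v : V) : ℝ :=
  sInf {L : ℝ | ∃ l, DPath E u v l ∧ plen x l = L}

/-- The out-ball of radius `r` around `v`: vertices reachable within node-length `r`. -/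
def ballOut {V : Type*} (E : V → V → Prop) (x : V → ℝ) (v : V) (r : ℝ) : Set V :=
  {u | ∃ l, DPath E v u l ∧ plen x l ≤ r}

/-- The out-boundary of a vertex set. -/
def outBd {V : Type*} (E : V → V → Prop) (S : Set V) : Set V :=
  {u | u ∉ S ∧ ∃ w ∈ S, E w u}

/-!
Each vertex `u` occupies the interval of radii `[d(v,u) - x u, d(v,u)]`, and it lies on the
out-boundary of `B⁺(v,s)` only for `s` in that interval. Integrating over `s ∈ (r, r + t)`
therefore bounds `∫ c(Γ⁺(B⁺(v,s))) ds` by the volume of `B⁺(v, r + t + a) \ B⁺(v, r)`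
whenever `x ≤ a`.
With `a = δ/(6 log₂ n)` and `t = a`: if no radius in `[a, δ)` were good, `vol(B⁺(v,r)) + vol(V)/n`
would triple each time `r` grows by `2a`, about `3 log₂ n` times in all, yet it stays between
`vol(V)/n` and `(n + 1) vol(V)/n`.
-/

open MeasureTheory Set

namespace RegionGrowing

variable {V : Type*} {E : V → V → Prop} {c x : V → ℝ} {v u : V} {a β r s t : ℝ}

lemma plen_nonneg (hx0 : ∀ u, 0 ≤ x u) (l : List V) : 0 ≤ plen x l :=
  List.sum_nonneg (by simpa using fun a _ => hx0 a)

lemma mem_ballOut : u ∈ ballOut E x v r ↔ ∃ l, DPath E v u l ∧ plen x l ≤ r := Iff.rfl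

lemma ballOut_mono (h : r ≤ s) : ballOut E x v r ⊆ ballOut E x v s :=
  fun _ ⟨l, hl, hp⟩ => ⟨l, hl, hp.trans h⟩

lemma dgr_le_of_mem_ballOut (hx0 : ∀ u, 0 ≤ x u) (h : u ∈ ballOut E x v r) :
    dgr E x v u ≤ r := by
  obtain ⟨l, hl, hp⟩ := h
  refine le_trans (csInf_le ⟨0, ?_⟩ (by exact ⟨l, hl, rfl⟩)) hp
  rintro _ ⟨l', -, rfl⟩
  exact plen_nonneg hx0 l'

lemma le_dgr_of_notMem_ballOut (hp : ∃ l, DPath E v u l) (h : u ∉ ballOut E x v r) :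
    r ≤ dgr E x v u := by
  obtain ⟨l, hl⟩ := hp
  refine le_csInf ⟨_, l, hl, rfl⟩ ?_
  rintro _ ⟨l', hl', rfl⟩
  exact le_of_not_ge fun hle => h (mem_ballOut.2 ⟨l', hl', hle⟩)

lemma mem_ballOut_of_dgr_lt (hp : ∃ l, DPath E v u l) (h : dgr E x v u < r) :
    u ∈ ballOut E x v r := by
  obtain ⟨l, hl⟩ := hp
  obtain ⟨_, ⟨l', hl', rfl⟩, hlt⟩ := exists_lt_of_csInf_lt (by exact ⟨_, l, hl, rfl⟩) h
  exact ⟨l', hl', hlt.le⟩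

/-- An unreachable vertex has the junk distance `sInf ∅ = 0`. -/
lemma exists_dPath_of_dgr_ne_zero (h : dgr E x v u ≠ 0) : ∃ l, DPath E v u l := by
  by_contra hno
  refine h ?_
  have hempty : {L : ℝ | ∃ l, DPath E v u l ∧ plen x l = L} = ∅ :=
    eq_empty_of_forall_notMem fun _ ⟨l, hl, _⟩ => hno ⟨l, hl⟩
  rw [dgr, hempty, Real.sInf_empty]

lemma mem_ballOut_add_of_adj {w : V} (hw : w ∈ ballOut E x v r) (he : E w u) :
    u ∈ ballOut E x v (r + x u) := by
  obtain ⟨l, ⟨hch, hhd, hlast⟩, hp⟩ := hw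
  refine ⟨l ++ [u], ⟨hch.append (List.isChain_singleton u) ?_, ?_, List.getLast?_concat⟩, ?_⟩
  · simpa [hlast] using he
  · rw [List.head?_append, hhd]
    rfl
  · simpa [plen] using hp

lemma mem_Icc_of_mem_outBd (hx0 : ∀ u, 0 ≤ x u)
    (hu : u ∈ outBd E (ballOut E x v s)) :
    s ∈ Icc (dgr E x v u - x u) (dgr E x v u) := by
  obtain ⟨hnot, w, hw, he⟩ := hu
  have hext := mem_ballOut_add_of_adj hw he
  have hle := dgr_le_of_mem_ballOut hx0 hext
  obtain ⟨l, hl, -⟩ := hext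
  exact ⟨by linarith, le_dgr_of_notMem_ballOut ⟨l, hl⟩ hnot⟩

lemma mem_diff_of_mem_Ioo_of_mem_Icc (hx0 : ∀ u, 0 ≤ x u) (hxa : ∀ u, x u ≤ a) (hr : 0 ≤ r)
    (hs : s ∈ Ioo r (r + t)) (hsu : s ∈ Icc (dgr E x v u - x u) (dgr E x v u)) :
    u ∈ ballOut E x v (r + t + a) \ ballOut E x v r := by
  have hp := exists_dPath_of_dgr_ne_zero (by linarith [hs.1, hsu.2] : dgr E x v u ≠ 0)
  refine ⟨mem_ballOut_of_dgr_lt hp (by linarith [hxa u, hsu.1, hs.2]), fun hur => ?_⟩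
  linarith [dgr_le_of_mem_ballOut hx0 hur, hs.1, hsu.2]

lemma measureReal_inter_Icc_mul_le (hc : ∀ u, 0 ≤ c u) (hx0 : ∀ u, 0 ≤ x u)
    (hxa : ∀ u, x u ≤ a) (hr : 0 ≤ r) (u : V) :
    volume.real (Ioo r (r + t) ∩ Icc (dgr E x v u - x u) (dgr E x v u)) * c u ≤
      (ballOut E x v (r + t + a) \ ballOut E x v r).indicator (fun w => c w * x w) u := by
  by_cases hu : u ∈ ballOut E x v (r + t + a) \ ballOut E x v r
  · rw [indicator_of_mem hu, mul_comm (c u)]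
    gcongr
    · exact hc u
    calc _ ≤ volume.real (Icc (dgr E x v u - x u) (dgr E x v u)) :=
          measureReal_mono inter_subset_right measure_Icc_lt_top.ne
      _ = x u := by simp [Real.volume_real_Icc, hx0 u]
  · have hempty : Ioo r (r + t) ∩ Icc (dgr E x v u - x u) (dgr E x v u) = ∅ :=
      eq_empty_of_forall_notMem fun s hs => hu (mem_diff_of_mem_Ioo_of_mem_Icc hx0 hxa hr hs.1 hs.2)
    simp [hempty, indicator_of_notMem hu]

lemma add_one_lt_three_pow {n : ℕ} (hn : 2 ≤ n) : n + 1 < 3 ^ (3 * Nat.log 2 n - 1) := by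
  obtain ⟨k, hk⟩ := Nat.exists_eq_add_one_of_ne_zero (Nat.log_pos one_lt_two hn).ne'
  have hlt := Nat.lt_pow_succ_log_self one_lt_two n
  rw [hk] at hlt ⊢
  have h27 := Nat.pow_le_pow_left (show 2 ≤ 27 by norm_num) k
  have hpos : 0 < 27 ^ k := Nat.pow_pos (by norm_num)
  calc n + 1 ≤ 2 ^ (k + 1 + 1) := hlt
    _ = 4 * 2 ^ k := by ring
    _ < 9 * 27 ^ k := by omega
    _ = 3 ^ (3 * (k + 1) - 1) := by
      rw [show 3 * (k + 1) - 1 = 2 + 3 * k by omega, pow_add, pow_mul]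
      norm_num

lemma add_div_lt_three_pow_mul {n : ℕ} (hn : 2 ≤ n) {S : ℝ} (hS : 0 < S) :
    S + S / n < 3 ^ (3 * Nat.log 2 n - 1) * (S / n) := by
  have hn0 : (0 : ℝ) < n := by positivity
  have hlt : ((n + 1 : ℕ) : ℝ) < ((3 ^ (3 * Nat.log 2 n - 1) : ℕ) : ℝ) :=
    Nat.cast_lt.2 (add_one_lt_three_pow hn)
  push_cast at hlt
  calc S + S / n = (n + 1) * (S / n) := by field_simp
    _ < _ := by gcongr

section Finite

variable [Fintype V]

noncomputable def ballVol (E : V → V → Prop) (c x : V → ℝ) (v : V) (r : ℝ) : ℝ :=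
  ∑ u, (ballOut E x v r).indicator (fun w => c w * x w) u

noncomputable def bdCost (E : V → V → Prop) (c x : V → ℝ) (v : V) (r : ℝ) : ℝ :=
  ∑ u, (outBd E (ballOut E x v r)).indicator c u

lemma ballVol_nonneg (hc : ∀ u, 0 ≤ c u) (hx0 : ∀ u, 0 ≤ x u) : 0 ≤ ballVol E c x v r :=
  Finset.sum_nonneg fun u _ => indicator_nonneg (fun w _ => mul_nonneg (hc w) (hx0 w)) u

lemma ballVol_le_sum (hc : ∀ u, 0 ≤ c u) (hx0 : ∀ u, 0 ≤ x u) :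
    ballVol E c x v r ≤ ∑ u, c u * x u :=
  Finset.sum_le_sum fun u _ => indicator_le_self' (fun w _ => mul_nonneg (hc w) (hx0 w)) u

lemma ballVol_sub_ballVol (h : r ≤ s) :
    ballVol E c x v s - ballVol E c x v r =
      ∑ u, (ballOut E x v s \ ballOut E x v r).indicator (fun w => c w * x w) u := by
  simp only [ballVol, ← Finset.sum_sub_distrib, indicator_sdiff (ballOut_mono h), Pi.sub_apply]

lemma ballVol_mono (hc : ∀ u, 0 ≤ c u) (hx0 : ∀ u, 0 ≤ x u) (h : r ≤ s) :
    ballVol E c x v r ≤ ballVol E c x v s := by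
  have hdiff := ballVol_sub_ballVol (E := E) (c := c) (x := x) (v := v) h
  have : 0 ≤ ballVol E c x v s - ballVol E c x v r := hdiff ▸
    Finset.sum_nonneg fun u _ => indicator_nonneg (fun w _ => mul_nonneg (hc w) (hx0 w)) u
  linarith

lemma bdCost_eq_zero_of_subsingleton [Subsingleton V] : bdCost E c x v r = 0 :=
  Finset.sum_eq_zero fun u _ => indicator_of_notMem (by
    rintro ⟨hu, w, hw, -⟩
    exact hu (Subsingleton.elim w u ▸ hw)) _

lemma bdCost_eq_zero_of_sum_eq_zero (hc : ∀ u, 0 ≤ c u) (hx0 : ∀ u, 0 ≤ x u)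
    (h : ∑ u, c u * x u = 0) : bdCost E c x v r = 0 := by
  refine Finset.sum_eq_zero fun u _ => ?_
  by_cases hu : u ∈ outBd E (ballOut E x v r)
  · rw [indicator_of_mem hu]
    have hcx := (Finset.sum_eq_zero_iff_of_nonneg fun w _ => mul_nonneg (hc w) (hx0 w)).1 h u
      (Finset.mem_univ u)
    refine (mul_eq_zero.1 hcx).resolve_right fun hxu => ?_
    obtain ⟨hnot, w, hw, he⟩ := hu
    have hext := mem_ballOut_add_of_adj hw he
    rw [hxu, add_zero] at hext
    exact hnot hext
  · exact indicator_of_notMem hu _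

noncomputable def layerCost (E : V → V → Prop) (c x : V → ℝ) (v : V) (s : ℝ) : ℝ :=
  ∑ u, (Icc (dgr E x v u - x u) (dgr E x v u)).indicator (fun _ => c u) s

lemma bdCost_le_layerCost (hc : ∀ u, 0 ≤ c u) (hx0 : ∀ u, 0 ≤ x u) (s : ℝ) :
    bdCost E c x v s ≤ layerCost E c x v s := by
  refine Finset.sum_le_sum fun u _ => ?_
  by_cases hu : u ∈ outBd E (ballOut E x v s)
  · rw [indicator_of_mem hu, indicator_of_mem (mem_Icc_of_mem_outBd hx0 hu)]
  · rw [indicator_of_notMem hu]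
    exact indicator_nonneg (fun _ _ => hc u) s

lemma integrableOn_layerCost {S : Set ℝ} (hS : volume S ≠ ⊤) :
    IntegrableOn (layerCost E c x v) S :=
  integrable_finsetSum _ fun _ _ => (integrableOn_const hS).indicator measurableSet_Icc

lemma integral_layerCost_le (hc : ∀ u, 0 ≤ c u) (hx0 : ∀ u, 0 ≤ x u) (hxa : ∀ u, x u ≤ a)
    (hr : 0 ≤ r) (ht : 0 ≤ t) :
    ∫ s in Ioo r (r + t), layerCost E c x v s ≤
      ballVol E c x v (r + t + a) - ballVol E c x v r := by
  have ha : 0 ≤ a := (hx0 v).trans (hxa v)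
  rw [ballVol_sub_ballVol (by linarith)]
  unfold layerCost
  rw [integral_finsetSum]
  · refine Finset.sum_le_sum fun u _ => ?_
    rw [setIntegral_indicator measurableSet_Icc, setIntegral_const, smul_eq_mul]
    exact measureReal_inter_Icc_mul_le hc hx0 hxa hr u
  · exact fun u _ => (integrableOn_const measure_Ioo_lt_top.ne).indicator measurableSet_Icc

lemma mul_le_ballVol_sub_of_le_bdCost (hc : ∀ u, 0 ≤ c u) (hx0 : ∀ u, 0 ≤ x u)
    (hxa : ∀ u, x u ≤ a) (hr : 0 ≤ r) (ht : 0 ≤ t) {C : ℝ}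
    (hC : ∀ s ∈ Ioo r (r + t), C ≤ bdCost E c x v s) :
    C * t ≤ ballVol E c x v (r + t + a) - ballVol E c x v r :=
  calc C * t = ∫ _ in Ioo r (r + t), C := by simp [ht, mul_comm]
    _ ≤ ∫ s in Ioo r (r + t), layerCost E c x v s :=
      setIntegral_mono_on (integrableOn_const measure_Ioo_lt_top.ne)
        (integrableOn_layerCost measure_Ioo_lt_top.ne) measurableSet_Ioo
        fun s hs => (hC s hs).trans (bdCost_le_layerCost hc hx0 s)
    _ ≤ _ := integral_layerCost_le hc hx0 hxa hr ht


lemma three_mul_le_ballVol_add (hc : ∀ u, 0 ≤ c u) (hx0 : ∀ u, 0 ≤ x u) (ha : 0 < a)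
    (hxa : ∀ u, x u ≤ a) (hr : 0 ≤ r)
    (h : ∀ s ∈ Ioo r (r + a), 2 / a * (ballVol E c x v s + β) ≤ bdCost E c x v s) :
    3 * (ballVol E c x v r + β) ≤ ballVol E c x v (r + 2 * a) + β := by
  have hgain := mul_le_ballVol_sub_of_le_bdCost hc hx0 hxa hr ha.le
    (C := 2 / a * (ballVol E c x v r + β)) fun s hs =>
      (mul_le_mul_of_nonneg_left (by linarith [ballVol_mono hc hx0 (E := E) (v := v) hs.1.le])
        (by positivity)).trans (h s hs)
  rw [show r + a + a = r + 2 * a by ring, mul_right_comm, div_mul_cancel₀ _ ha.ne'] at hgain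
  linarith

lemma three_pow_mul_le_ballVol_add (hc : ∀ u, 0 ≤ c u) (hx0 : ∀ u, 0 ≤ x u) (ha : 0 < a)
    (hxa : ∀ u, x u ≤ a) (K : ℕ) (hr : 0 ≤ r)
    (h : ∀ s ∈ Ico r (r + 2 * K * a), 2 / a * (ballVol E c x v s + β) ≤ bdCost E c x v s) :
    3 ^ K * (ballVol E c x v r + β) ≤ ballVol E c x v (r + 2 * K * a) + β := by
  induction K generalizing r with
  | zero => simp
  | succ K ih =>
    push_cast at h ⊢
    have hKa : 0 ≤ (K : ℝ) * a := by positivity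
    have hstep := three_mul_le_ballVol_add hc hx0 ha hxa hr fun s hs =>
      h s ⟨hs.1.le, by linarith [hs.2]⟩
    have hrest := ih (r := r + 2 * a) (by linarith) fun s hs =>
      h s ⟨by linarith [hs.1], by linarith [hs.2]⟩
    calc (3 : ℝ) ^ (K + 1) * (ballVol E c x v r + β)
        = 3 ^ K * (3 * (ballVol E c x v r + β)) := by ring
      _ ≤ 3 ^ K * (ballVol E c x v (r + 2 * a) + β) := by gcongr
      _ ≤ ballVol E c x v (r + 2 * a + 2 * K * a) + β := hrest
      _ = ballVol E c x v (r + 2 * (K + 1) * a) + β := by ring_nf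

lemma exists_bdCost_le (hc : ∀ u, 0 ≤ c u) (hx0 : ∀ u, 0 ≤ x u) (ha : 0 < a)
    (hxa : ∀ u, x u ≤ a) (hr : 0 ≤ r) (K : ℕ)
    (hK : ∑ u, c u * x u + β < 3 ^ K * β) :
    ∃ s ∈ Ico r (r + 2 * K * a), bdCost E c x v s ≤ 2 / a * (ballVol E c x v s + β) := by
  by_contra! hbad
  have hgrow := three_pow_mul_le_ballVol_add hc hx0 ha hxa K hr fun s hs => (hbad s hs).le
  have hstart : 3 ^ K * β ≤ 3 ^ K * (ballVol E c x v r + β) := by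
    gcongr
    linarith [ballVol_nonneg hc hx0 (E := E) (v := v) (r := r)]
  linarith [ballVol_le_sum hc hx0 (E := E) (v := v) (r := r + 2 * K * a)]

lemma exists_radius_bdCost_le (hc : ∀ u, 0 ≤ c u) (hx0 : ∀ u, 0 ≤ x u) (ha : 0 < a)
    (hxa : ∀ u, x u ≤ a) (hn : 2 ≤ Fintype.card V) (hvol : 0 < ∑ u, c u * x u) {δ : ℝ}
    (hδ : 6 * Nat.log 2 (Fintype.card V) * a ≤ δ) :
    ∃ r, a ≤ r ∧ r < δ ∧
      bdCost E c x v r ≤ 2 / a * (ballVol E c x v r + (∑ u, c u * x u) / Fintype.card V) := by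
  obtain ⟨r, ⟨har, hrK⟩, hr⟩ :=
    exists_bdCost_le hc hx0 ha hxa ha.le _ (add_div_lt_three_pow_mul hn hvol)
  refine ⟨r, har, ?_, hr⟩
  have hm := Nat.log_pos one_lt_two hn
  rw [Nat.cast_sub (by omega)] at hrK
  push_cast at hrK
  linarith

end Finite

end RegionGrowing

open RegionGrowing

/-- Node-weighted directed region growing: there is a radius
$r ∈ [δ/(6\log_2 n), δ)$ with
$c(Γ^+(B^+(v,r))) ≤ (12\log_2 n/δ)[\mathrm{vol}(B^+(v,r)) + \mathrm{vol}(V)/n]$. -/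
theorem stmt4 {V : Type*} [Fintype V] (E : V → V → Prop) (c x : V → ℝ)
    (hc : ∀ u, 0 ≤ c u) (hx0 : ∀ u, 0 ≤ x u)
    (δ : ℝ) (hδ : 0 < δ)
    (hx : ∀ u, x u ≤ δ / (6 * Real.logb 2 (Fintype.card V)))
    (v : V) :
    ∃ r : ℝ, δ / (6 * Real.logb 2 (Fintype.card V)) ≤ r ∧ r < δ ∧
      (∑ u : V, (outBd E (ballOut E x v r)).indicator c u) ≤
        (12 * Real.logb 2 (Fintype.card V) / δ) *
          ((∑ u : V, (ballOut E x v r).indicator (fun w => c w * x w) u) +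
            (∑ u : V, c u * x u) / Fintype.card V) := by
  rcases subsingleton_or_nontrivial V with hV | hV
  · have hn : Fintype.card V = 1 :=
      le_antisymm (Fintype.card_le_one_iff_subsingleton.2 hV) (Fintype.card_pos_iff.2 ⟨v⟩)
    refine ⟨0, by simp [hn], hδ, ?_⟩
    change bdCost E c x v 0 ≤ _
    simp [bdCost_eq_zero_of_subsingleton, hn]
  have hn : 2 ≤ Fintype.card V := Fintype.one_lt_card
  have hm : (1 : ℝ) ≤ Nat.log 2 (Fintype.card V) := by exact_mod_cast Nat.log_pos one_lt_two hn
  have hmL : (Nat.log 2 (Fintype.card V) : ℝ) ≤ Real.logb 2 (Fintype.card V) := by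
    exact_mod_cast Real.natLog_le_logb _ 2
  have hL : 0 < Real.logb 2 (Fintype.card V) := by linarith
  set a := δ / (6 * Real.logb 2 (Fintype.card V)) with ha_def
  have ha : 0 < a := by positivity
  have hscale : 12 * Real.logb 2 (Fintype.card V) / δ = 2 / a := by
    rw [ha_def]
    field_simp
    ring
  rcases (Finset.sum_nonneg fun u _ => mul_nonneg (hc u) (hx0 u)).eq_or_lt with hvol0 | hvol
  · refine ⟨a, le_rfl, div_lt_self hδ (by linarith), ?_⟩
    change bdCost E c x v a ≤ _
    rw [bdCost_eq_zero_of_sum_eq_zero hc hx0 hvol0.symm, ← hvol0, zero_div, add_zero, hscale]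
    exact mul_nonneg (div_pos two_pos ha).le (ballVol_nonneg hc hx0)
  rw [hscale]
  refine exists_radius_bdCost_le hc hx0 ha hx hn hvol ?_
  calc 6 * Nat.log 2 (Fintype.card V) * a ≤ 6 * Real.logb 2 (Fintype.card V) * a := by gcongr
    _ = δ := by rw [ha_def]; field_simp
end

section
/- Let $G = (V,E)$ be a directed graph and let $L_0, L_1, \dots$ be disjoint vertex sets produced by the layering procedure: for $i$ even, $L_i$ together with earlier layers is 'out-closed' except through the removed boundary $S_i = \Gamma^+(L_i)$, and for $i$ odd, $S_i = \Gamma^-(L_i)$, with $S = \bigcup_i S_i$. Then in $G \setminus S$: if $i$ is even, no vertex of $L_i$ can reach any vertex outside $L_i$; if $i$ is odd, no vertex of $L_i$ is reachable from any vertex outside $L_i$. -/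
/-- Layering separation (Claim 3.3): with layers produced by the alternating boundary
removal (even layers cut out-boundaries, odd layers cut in-boundaries, collected in `S`),
in `G \ S` no vertex of an even layer reaches outside its layer, and no vertex of an odd
layer is reached from outside its layer. -/
theorem stmt5 {V : Type*} (E : V → V → Prop) (L : ℕ → Set V) (S : Set V)
    (hdisj : ∀ i j, i ≠ j → Disjoint (L i) (L j))
    (hcover : ∀ v : V, ∃ i, v ∈ L i)
    -- even stage `i`: any edge leaving the union of the first `i+1` layers has its head
    -- in the removed out-boundary `S`
    (hB : ∀ i, Even i → ∀ a b, E a b → (∃ j ≤ i, a ∈ L j) → (∀ j ≤ i, b ∉ L j) → b ∈ S)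
    -- odd stage `i`: any edge entering the union of the first `i+1` layers has its tail
    -- in the removed in-boundary `S`
    (hA : ∀ i, Odd i → ∀ a b, E a b → (∃ j ≤ i, b ∈ L j) → (∀ j ≤ i, a ∉ L j) → a ∈ S) :
    (∀ i, Even i → ∀ u ∈ L i, ∀ w : V,
        Relation.ReflTransGen (fun p q => E p q ∧ p ∉ S ∧ q ∉ S) u w → w ∈ L i) ∧
    (∀ i, Odd i → ∀ w ∈ L i, ∀ u : V,
        Relation.ReflTransGen (fun p q => E p q ∧ p ∉ S ∧ q ∉ S) u w → u ∈ L i) := by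
  have huniq : ∀ v : V, ∀ i j, v ∈ L i → v ∈ L j → i = j := by
    intro v i j hi hj
    by_contra h
    exact Set.disjoint_left.mp (hdisj i j h) hi hj
  constructor
  · -- even layers: reachability stays inside
    intro i hi u hu w hw
    induction hw with
    | refl => exact hu
    | tail _ e ih =>
      rename_i a b _
      obtain ⟨he, haS, hbS⟩ := e
      obtain ⟨k, hk⟩ := hcover b
      rcases lt_trichotomy k i with hki | hki | hki
      · rcases Nat.even_or_odd k with hke | hko
        · -- k even, k < i: use hA at odd stage k+1 < i
          have hlt : k + 1 < i := by
            rcases Nat.lt_or_ge (k+1) i with h | h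
            · exact h
            · have : k + 1 = i := le_antisymm (Nat.succ_le_of_lt hki) h
              exact absurd (this ▸ hi) (by simpa using hke.add_one)
          exact absurd (hA (k+1) hke.add_one a b he ⟨k, Nat.le_succ k, hk⟩
            (fun j hj hj' => absurd (huniq a j i hj' ih) (by omega))) haS
        · exact absurd (hA k hko a b he ⟨k, le_refl k, hk⟩
            (fun j hj hj' => absurd (huniq a j i hj' ih) (by omega))) haS
      · exact hki ▸ hk
      · exact absurd (hB i hi a b he ⟨i, le_refl i, ih⟩
          (fun j hj hj' => absurd (huniq b j k hj' hk) (by omega))) hbS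
  · -- odd layers: reachability from outside impossible
    intro i hi w hw u hu
    induction hu using Relation.ReflTransGen.head_induction_on with
    | refl => exact hw
    | head e _ ih =>
      rename_i a b _
      obtain ⟨he, haS, hbS⟩ := e
      obtain ⟨j, hj⟩ := hcover a
      rcases lt_trichotomy j i with hji | hji | hji
      · rcases Nat.even_or_odd j with hje | hjo
        · exact absurd (hB j hje a b he ⟨j, le_refl j, hj⟩
            (fun j' hj' hj'' => absurd (huniq b j' i hj'' ih) (by omega))) hbS
        · have hlt : j + 1 < i := by
            rcases Nat.lt_or_ge (j+1) i with h | h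
            · exact h
            · have : j + 1 = i := le_antisymm (Nat.succ_le_of_lt hji) h
              exact absurd (this ▸ hi) (by simpa using hjo.add_one)
          exact absurd (hB (j+1) hjo.add_one a b he ⟨j, Nat.le_succ j, hj⟩
            (fun j' hj' hj'' => absurd (huniq b j' i hj'' ih) (by omega))) hbS
      · exact hji ▸ hj
      · exact absurd (hA i hi a b he ⟨i, le_refl i, ih⟩
          (fun j' hj' hj'' => absurd (huniq a j' j hj'' hj) (by omega))) haS
end

section
/- Let $B_1, B_2, \dots, B_m$ be a sequence of disjoint vertex sets ('in-balls') constructed sequentially in a directed graph $G$, where $B_i$ is an in-ball in the graph $G \setminus \bigcup_{j<i} B_j$ and $S_i := \Gamma^-(B_i)$ is its in-boundary in that graph; let $S = \bigcup_i S_i$. Then for every $i$, and every $u \in \bigcup_{j \leq i} B_j$ and $w \in V \setminus \bigcup_{j \leq i} B_j$, there is no directed $w$-$u$ path in $G \setminus S$. -/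
/-- Claim 3.11 (in-ball case): for disjoint sets `B i` cut sequentially, with `S`
collecting the in-boundaries taken in the remaining graph, no vertex of
`⋃_{j ≤ i} B j` is reachable in `G \ S` from any vertex outside `⋃_{j ≤ i} B j`. -/
theorem stmt8 {V : Type*} (E : V → V → Prop) (B : ℕ → Set V) (S : Set V)
    (hdisj : ∀ i j, i ≠ j → Disjoint (B i) (B j))
    -- `S` is the union of the in-boundaries of `B i` in the graph `G \ ⋃_{j<i} B j`
    (hS : S = ⋃ i, {w : V | (∀ j < i, w ∉ B j) ∧ w ∉ B i ∧ ∃ u ∈ B i, E w u}) :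
    ∀ (i : ℕ) (u w : V), (∃ j ≤ i, u ∈ B j) → (∀ j ≤ i, w ∉ B j) →
      ¬ Relation.ReflTransGen (fun p q => E p q ∧ p ∉ S ∧ q ∉ S) w u := by
  intro i u w hu hw hpath
  obtain ⟨j, hj, huj⟩ := hu
  have key : ∀ v, Relation.ReflTransGen (fun p q => E p q ∧ p ∉ S ∧ q ∉ S) w v →
      ∀ k ≤ i, v ∉ B k := by
    intro v hv
    induction hv with
    | refl => exact hw
    | tail hpq hedge ih =>
      intro k hk hvk
      apply hedge.2.1
      rw [hS]
      exact Set.mem_iUnion.2 ⟨k, fun j hj => ih j (le_trans hj.le hk), ih k hk,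
        _, hvk, hedge.1⟩
  exact key u hpath j hj huj
end
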